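/- arXiv:2506.15561 — 6 statements merged into one kernel-verified Lean document; each statement's English description precedes it below -/
import Mathlib

section
/- Let G be a partially directed graph on a finite vertex set V that is strictly acyclic (no semi-directed cycles) and satisfies: whenever I→J is a directed edge and J—K is an undirected edge of G, the vertices I and K are adjacent. Then any two vertices J and K lying in the same chain component of G have the same set of parents: Pa_G({J}) = Pa_G({K}). -/
open scoped Classical

/-- A partially directed graph on vertex type `V`: directed edges `dir i j` (i→j) and
undirected edges `undir i j` (i—j), with at most one edge between any two vertices. -/
structure PDG (V : Type) where
  dir : V → V → Prop
  undir : V → V → Prop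
  undir_symm : ∀ i j, undir i j → undir j i
  undir_irrefl : ∀ i, ¬ undir i i
  dir_irrefl : ∀ i, ¬ dir i i
  not_dir_dir : ∀ i j, dir i j → ¬ dir j i
  not_dir_undir : ∀ i j, dir i j → ¬ undir i j

namespace PDG

variable {V : Type}

/-- Adjacency: joined by some edge. -/
def Adj (G : PDG V) (i j : V) : Prop := G.dir i j ∨ G.dir j i ∨ G.undir i j

/-- A semi-directed step from `i` to `j`: an undirected edge or a directed edge `i→j`. -/
def SStep (G : PDG V) (i j : V) : Prop := G.dir i j ∨ G.undir i j

/-- Existence of a semi-directed cycle: `f 0, …, f m` with `f 0 = f m`, `m ≥ 2`,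
each consecutive pair a semi-directed step, at least one step directed. -/
def HasSemiDirectedCycle (G : PDG V) : Prop :=
  ∃ (m : ℕ) (f : ℕ → V), 2 ≤ m ∧ f 0 = f m ∧
    (∀ i < m, G.SStep (f i) (f (i + 1))) ∧ (∃ i < m, G.dir (f i) (f (i + 1)))

/-- Strictly acyclic: no semi-directed cycle. -/
def StrictlyAcyclic (G : PDG V) : Prop := ¬ G.HasSemiDirectedCycle

/-- Joined by a path of undirected edges (possibly trivial). -/
def sameChain (G : PDG V) (i j : V) : Prop := Relation.ReflTransGen G.undir i j

/-- The chain component of a vertex. -/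
def chainComp (G : PDG V) (i : V) : Set V := {j | G.sameChain i j}

/-- Parents of a vertex set. -/
def Pa (G : PDG V) (D : Set V) : Set V := {i | ∃ d ∈ D, G.dir i d}

/-- Ancestors of a vertex set (directed path, possibly of length 0). -/
def An (G : PDG V) (D : Set V) : Set V := {i | ∃ d ∈ D, Relation.ReflTransGen G.dir i d}

/-- A DAG: only directed edges, and no directed cycles. -/
def IsDAG (G : PDG V) : Prop :=
  (∀ i j, ¬ G.undir i j) ∧ ∀ i, ¬ Relation.TransGen G.dir i i

/-- Unshielded collider `(i, k, j)`: `i→k ← j` with `i`, `j` distinct and non-adjacent. -/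
def UC (G : PDG V) (i k j : V) : Prop :=
  i ≠ j ∧ G.dir i k ∧ G.dir j k ∧ ¬ G.Adj i j

/-- `D ∈ [G]`: `D` is a DAG with the same skeleton as `G`, containing every directed edge
of `G`, all of whose unshielded colliders are unshielded colliders of `G`. -/
def InClass (D G : PDG V) : Prop :=
  D.IsDAG ∧ (∀ i j, D.Adj i j ↔ G.Adj i j) ∧ (∀ i j, G.dir i j → D.dir i j) ∧
    (∀ i k j, D.UC i k j → G.UC i k j)

/-- `C` is a nonempty set, connected by undirected edges within `C`, receiving a directed
edge from `I` and one from `J`. -/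
def ComplexCand (G : PDG V) (I : V) (C : Set V) (J : V) : Prop :=
  C.Nonempty ∧
  (∀ a ∈ C, ∀ b ∈ C,
    Relation.ReflTransGen (fun x y => G.undir x y ∧ x ∈ C ∧ y ∈ C) a b) ∧
  (∃ c ∈ C, G.dir I c) ∧ (∃ c ∈ C, G.dir J c)

/-- Minimal complex `(I, C, J)` of `G`. -/
def MinimalComplex (G : PDG V) (I : V) (C : Set V) (J : V) : Prop :=
  I ≠ J ∧ ¬ G.Adj I J ∧ (∀ a ∈ C, ∀ b ∈ C, G.sameChain a b) ∧
  G.ComplexCand I C J ∧ ∀ C' ⊂ C, ¬ G.ComplexCand I C' J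

/-- Remove all directed edges pointing into `S`. -/
def removeInto (G : PDG V) (S : Set V) : PDG V where
  dir i j := G.dir i j ∧ j ∉ S
  undir := G.undir
  undir_symm := G.undir_symm
  undir_irrefl := G.undir_irrefl
  dir_irrefl i h := G.dir_irrefl i h.1
  not_dir_dir i j h h' := G.not_dir_dir i j h.1 h'.1
  not_dir_undir i j h h' := G.not_dir_undir i j h.1 h'

/-- Induced subgraph on the vertex set `D` (kept on the same vertex type; edges
outside `D` are discarded). -/
def induce (G : PDG V) (D : Set V) : PDG V where
  dir i j := G.dir i j ∧ i ∈ D ∧ j ∈ D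
  undir i j := G.undir i j ∧ i ∈ D ∧ j ∈ D
  undir_symm i j h := ⟨G.undir_symm i j h.1, h.2.2, h.2.1⟩
  undir_irrefl i h := G.undir_irrefl i h.1
  dir_irrefl i h := G.dir_irrefl i h.1
  not_dir_dir i j h h' := G.not_dir_dir i j h.1 h'.1
  not_dir_undir i j h h' := G.not_dir_undir i j h.1 h'.1

/-- `G(↛X)`: `G` with every directed edge into `X ∩ An_G(Y)` removed. -/
def noInto (G : PDG V) (X Y : Set V) : PDG V := G.removeInto (X ∩ G.An Y)

/-- `RM(G; X, Y)`: the induced subgraph of `G(↛X)` on `An_{G(↛X)}(Y)`. -/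
def RM (G : PDG V) (X Y : Set V) : PDG V :=
  (G.noInto X Y).induce ((G.noInto X Y).An Y)

/-- There is a proper semi-directed path from `X` to `Y` starting with an undirected
edge: distinct vertices `f 0 ∈ X, …, f m ∈ Y`, only `f 0` in `X`, each consecutive pair a
semi-directed step, the first edge undirected. -/
def HasProperUndirStartPath (G : PDG V) (X Y : Set V) : Prop :=
  ∃ (m : ℕ) (f : ℕ → V), 1 ≤ m ∧
    (∀ i ≤ m, ∀ j ≤ m, f i = f j → i = j) ∧
    f 0 ∈ X ∧ f m ∈ Y ∧ (∀ i < m, G.SStep (f i) (f (i + 1))) ∧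
    (∀ i, 1 ≤ i → i ≤ m → f i ∉ X) ∧ G.undir (f 0) (f 1)

/-- Membership in the chain decomposition `CD_G(D)`: the nonempty intersections of `D`
with chain components of `G`. -/
def CDmem (G : PDG V) (D S : Set V) : Prop :=
  S.Nonempty ∧ ∃ i, S = D ∩ G.chainComp i

end PDG

noncomputable section Prob

open PDG

variable {V : Type} [Fintype V] [DecidableEq V] {𝒳 : V → Type} [∀ i, Fintype (𝒳 i)]
  [∀ i, Nonempty (𝒳 i)]

/-- Marginal `p_S(v_S)`: sum of `p` over configurations agreeing with `v` on `S`. -/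
def marginal (p : (∀ i, 𝒳 i) → ℝ) (S : Set V) (v : ∀ i, 𝒳 i) : ℝ :=
  ∑ w : ∀ i, 𝒳 i, if ∀ i ∈ S, w i = v i then p w else 0

/-- Conditional `p(v_A | v_S) = p_{A∪S}(v_{A∪S}) / p_S(v_S)`. -/
def condP (p : (∀ i, 𝒳 i) → ℝ) (A S : Set V) (v : ∀ i, 𝒳 i) : ℝ :=
  marginal p (A ∪ S) v / marginal p S v

/-- A strictly positive pmf. -/
def IsPositivePMF (p : (∀ i, 𝒳 i) → ℝ) : Prop :=
  (∀ v, 0 < p v) ∧ ∑ v : ∀ i, 𝒳 i, p v = 1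

/-- `p` factorizes according to the DAG `D`. -/
def FactorizesDAG (p : (∀ i, 𝒳 i) → ℝ) (D : PDG V) : Prop :=
  ∀ v, p v = ∏ i : V, condP p {i} (D.Pa {i}) v

/-- The (finitely many) chain components of `G`. -/
def chainComponents (G : PDG V) : Finset (Set V) :=
  Finset.univ.image (fun i => G.chainComp i)

/-- The outer chain-graph factorization `∏_τ p(v_τ | v_{Pa_G(τ)})` over chain
components `τ` of `G`. -/
def chainProd (G : PDG V) (p : (∀ i, 𝒳 i) → ℝ) (v : ∀ i, 𝒳 i) : ℝ :=
  ∏ τ ∈ chainComponents G, condP p τ (G.Pa τ) v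

/-- The product `∏_j p(v_{D_j} | v_{Pa_G(D_j)})` over the chain decomposition
`CD_G(D) = {D_1,…,D_k}` (empty intersections contribute a factor `1`). -/
def cdProd (G : PDG V) (p : (∀ i, 𝒳 i) → ℝ) (D : Set V) (v : ∀ i, 𝒳 i) : ℝ :=
  ∏ τ ∈ chainComponents G, condP p (D ∩ τ) (G.Pa (D ∩ τ)) v

/-- The identification formula (g-formula) of Perković's theorem:
`Σ_b ∏_j p(b_j | pa_G(B_j))` where `{B_1,…,B_k} = CD_G(An_{G_{V∖X}}(Y))`,
the sum running over configurations of `B = An_{G_{V∖X}}(Y) ∖ Y`, all other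
coordinates (in particular the intervened values on `X` and the values on `Y`)
being fixed by `v`. -/
def gFormula (G : PDG V) (p : (∀ i, 𝒳 i) → ℝ) (X Y : Set V) (v : ∀ i, 𝒳 i) : ℝ :=
  ∑ w : ∀ i, 𝒳 i,
    if ∀ i, i ∉ (G.induce Xᶜ).An Y \ Y → w i = v i then
      cdProd G p ((G.induce Xᶜ).An Y) w
    else 0

/-- The re-weighting formula `Σ_{v'} p(v) / ∏_j p(x_j | pa_G(X_j))`, where
`{X_1,…,X_m} = CD_G(X ∩ An_G(Y))` and the sum runs over configurations of
`V ∖ (X ∪ Y)`, the coordinates on `X ∪ Y` being fixed by `v`. -/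
def rwFormula (G : PDG V) (p : (∀ i, 𝒳 i) → ℝ) (X Y : Set V) (v : ∀ i, 𝒳 i) : ℝ :=
  ∑ w : ∀ i, 𝒳 i,
    if ∀ i ∈ X ∪ Y, w i = v i then p w / cdProd G p (X ∩ G.An Y) w else 0

/-- The `Y`-marginal of the truncated factorization of `p` with respect to the DAG `D`:
`Σ_{v_{V∖(X∪Y)}} ∏_{i ∈ V∖X} p(v_i | v_{Pa_D(i)})`, the coordinates on `X ∪ Y` being
fixed by `v`. -/
def truncMarg (D : PDG V) (p : (∀ i, 𝒳 i) → ℝ) (X Y : Set V) (v : ∀ i, 𝒳 i) : ℝ :=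
  ∑ w : ∀ i, 𝒳 i,
    if ∀ i ∈ X ∪ Y, w i = v i then
      ∏ i ∈ Finset.univ.filter (fun i => i ∉ X), condP p {i} (D.Pa {i}) w
    else 0

end Prob


private lemma step_parent {V : Type} (G : PDG V)
    (hSA : G.StrictlyAcyclic)
    (hMeek : ∀ I J K : V, G.dir I J → G.undir J K → G.Adj I K)
    {I J K : V} (hIJ : G.dir I J) (hJK : G.undir J K) : G.dir I K := by
  rcases hMeek I J K hIJ hJK with h | h | h
  · exact h
  · exact absurd ⟨3, (fun n => match n with | 0 => I | 1 => J | 2 => K | _ => I),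
      by norm_num, rfl,
      by
        intro i hi
        interval_cases i
        · exact Or.inl hIJ
        · exact Or.inr hJK
        · exact Or.inl h,
      ⟨0, by norm_num, hIJ⟩⟩ hSA
  · exact absurd ⟨3, (fun n => match n with | 0 => I | 1 => J | 2 => K | _ => I),
      by norm_num, rfl,
      by
        intro i hi
        interval_cases i
        · exact Or.inl hIJ
        · exact Or.inr hJK
        · exact Or.inr (G.undir_symm _ _ h),
      ⟨0, by norm_num, hIJ⟩⟩ hSA

/-- In a strictly acyclic partially directed graph in which `I→J` and `J—K`
force `I` and `K` to be adjacent, any two vertices in the same chain component have the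
same set of parents. -/
theorem stmt1 {V : Type} [Fintype V] (G : PDG V)
    (hSA : G.StrictlyAcyclic)
    (hMeek : ∀ I J K : V, G.dir I J → G.undir J K → G.Adj I K) :
    ∀ J K : V, G.sameChain J K → G.Pa {J} = G.Pa {K} := by
  have key : ∀ J K : V, G.undir J K → G.Pa {J} = G.Pa {K} := by
    intro J K h
    ext I
    constructor
    · rintro ⟨d, hd, hIdir⟩
      simp only [Set.mem_singleton_iff] at hd
      subst hd
      exact ⟨K, rfl, step_parent G hSA hMeek hIdir h⟩
    · rintro ⟨d, hd, hIdir⟩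
      simp only [Set.mem_singleton_iff] at hd
      subst hd
      exact ⟨J, rfl, step_parent G hSA hMeek hIdir (G.undir_symm _ _ h)⟩
  intro J K hJK
  induction hJK with
  | refl => rfl
  | tail _ h ih => exact ih.trans (key _ _ h)
end

section
/- Let G be a partially directed graph on a finite vertex set V that is strictly acyclic (no semi-directed cycles) and satisfies: whenever I→J is a directed edge and J—K is an undirected edge of G, the vertices I and K are adjacent. Then every minimal complex of G is an unshielded collider: for every minimal complex (I,C,J) of G, the set C consists of a single vertex K, with directed edges I→K and J→K and with I and J not adjacent. -/
open scoped Classical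

lemma pdg_triangle {V : Type} (G : PDG V) (hSA : G.StrictlyAcyclic)
    {a b c : V} (h1 : G.dir a b) (h2 : G.SStep b c) (h3 : G.SStep c a) : False := by
  apply hSA
  refine ⟨3, fun i => match i with | 0 => a | 1 => b | 2 => c | _ => a, by norm_num,
    rfl, ?_, ⟨0, by norm_num, h1⟩⟩
  intro i hi
  interval_cases i
  · exact Or.inl h1
  · exact h2
  · exact h3

lemma pdg_push {V : Type} (G : PDG V) (hSA : G.StrictlyAcyclic)
    (hMeek : ∀ I J K : V, G.dir I J → G.undir J K → G.Adj I K)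
    {I : V} {C : Set V} {c₀ : V} (h0 : G.dir I c₀) {c : V}
    (hpath : Relation.ReflTransGen (fun x y => G.undir x y ∧ x ∈ C ∧ y ∈ C) c₀ c) :
    G.dir I c := by
  induction hpath with
  | refl => exact h0
  | tail _ step ih =>
    rename_i b c _
    rcases hMeek I b c ih step.1 with h | h | h
    · exact h
    · exact absurd (pdg_triangle G hSA h (Or.inl ih) (Or.inr step.1)) id
    · exact absurd (pdg_triangle G hSA ih (Or.inr step.1)
        (Or.inr (G.undir_symm _ _ h))) id

/-- In a strictly acyclic partially directed graph in which `I→J` and `J—K`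
force `I` and `K` to be adjacent, every minimal complex is an unshielded collider. -/
theorem stmt2 {V : Type} [Fintype V] (G : PDG V)
    (hSA : G.StrictlyAcyclic)
    (hMeek : ∀ I J K : V, G.dir I J → G.undir J K → G.Adj I K) :
    ∀ (I : V) (C : Set V) (J : V), G.MinimalComplex I C J →
      ∃ K : V, C = {K} ∧ G.dir I K ∧ G.dir J K ∧ ¬ G.Adj I J := by
  intro I C J hMC
  obtain ⟨hIJ, hnadj, _, ⟨hne, hconn, ⟨c₁, hc₁C, hIc₁⟩, ⟨c₂, hc₂C, hJc₂⟩⟩, hmin⟩ := hMC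
  have hIall : ∀ c ∈ C, G.dir I c := fun c hc =>
    pdg_push G hSA hMeek hIc₁ (hconn c₁ hc₁C c hc)
  have hJall : ∀ c ∈ C, G.dir J c := fun c hc =>
    pdg_push G hSA hMeek hJc₂ (hconn c₂ hc₂C c hc)
  refine ⟨c₁, ?_, hIc₁, hJall c₁ hc₁C, hnadj⟩
  by_contra hCK
  apply hmin {c₁} ⟨Set.singleton_subset_iff.2 hc₁C, fun h => hCK (Set.Subset.antisymm h (Set.singleton_subset_iff.2 hc₁C))⟩
  refine ⟨⟨c₁, rfl⟩, ?_, ⟨c₁, rfl, hIc₁⟩, ⟨c₁, rfl, hJall c₁ hc₁C⟩⟩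
  rintro a rfl b rfl
  exact Relation.ReflTransGen.refl
end

section
/- Let G be a partially directed graph on a finite vertex set V that is strictly acyclic (no semi-directed cycles) and satisfies: whenever I→J is a directed edge and J—K is an undirected edge of G, the vertices I and K are adjacent. Let D be a DAG on V with the same skeleton as G, such that every directed edge of G is a directed edge of D and every unshielded collider of D is an unshielded collider of G (i.e., D ∈ [G]). Then D and G have the same skeleton and exactly the same minimal complexes; in particular, by Frydenberg's characterization of Markov equivalence of chain graphs, D and G are Markov-equivalent chain graphs. -/
open scoped Classical

namespace PDG

variable {V : Type}

lemma cycle3 (G : PDG V) (a b c : V) (h1 : G.SStep a b) (h2 : G.SStep b c)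
    (h3 : G.SStep c a) (hd : G.dir a b ∨ G.dir b c ∨ G.dir c a) :
    G.HasSemiDirectedCycle := by
  refine ⟨3, fun n => if n = 0 then a else if n = 1 then b else if n = 2 then c else a,
    by norm_num, by norm_num, ?_, ?_⟩
  · intro i hi
    interval_cases i <;> simpa
  · rcases hd with h | h | h
    · exact ⟨0, by norm_num, by simpa⟩
    · exact ⟨1, by norm_num, by simpa⟩
    · exact ⟨2, by norm_num, by simpa⟩

lemma dir_all (G : PDG V) (hSA : G.StrictlyAcyclic)
    (hMeek : ∀ I J K : V, G.dir I J → G.undir J K → G.Adj I K)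
    {I : V} {C : Set V} {a b : V}
    (hrt : Relation.ReflTransGen (fun x y => G.undir x y ∧ x ∈ C ∧ y ∈ C) a b)
    (ha : G.dir I a) : G.dir I b := by
  induction hrt with
  | refl => exact ha
  | tail h hstep ih =>
      rename_i x y
      rcases hMeek I x y ih hstep.1 with hIy | hyI | hIy
      · exact hIy
      · exact absurd (G.cycle3 y I x (Or.inl hyI) (Or.inl ih)
          (Or.inr hstep.1) (Or.inl hyI)) hSA
      · exact absurd (G.cycle3 I x y (Or.inl ih) (Or.inr hstep.1)
          (Or.inr (G.undir_symm _ _ hIy)) (Or.inl ih)) hSA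

lemma mc_singleton (G : PDG V) {I J k : V} (hIJ : I ≠ J) (hAdj : ¬ G.Adj I J)
    (h1 : G.dir I k) (h2 : G.dir J k) : G.MinimalComplex I {k} J := by
  refine ⟨hIJ, hAdj, ?_, ⟨⟨k, rfl⟩, ?_, ⟨k, rfl, h1⟩, ⟨k, rfl, h2⟩⟩, ?_⟩
  · intro a ha b hb
    rw [Set.mem_singleton_iff] at ha hb
    subst ha; subst hb; exact Relation.ReflTransGen.refl
  · intro a ha b hb
    rw [Set.mem_singleton_iff] at ha hb
    subst ha; subst hb; exact Relation.ReflTransGen.refl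
  · rintro C' hC' ⟨⟨x, hx⟩, -, -, -⟩
    have hxk : x = k := hC'.1 hx
    subst hxk
    exact hC'.not_subset (Set.singleton_subset_iff.mpr hx)

lemma mc_G_singleton (G : PDG V) (hSA : G.StrictlyAcyclic)
    (hMeek : ∀ I J K : V, G.dir I J → G.undir J K → G.Adj I K)
    {I J : V} {C : Set V} (h : G.MinimalComplex I C J) :
    ∃ k, C = {k} ∧ G.dir I k ∧ G.dir J k := by
  obtain ⟨hne, hnadj, hchain, ⟨hCne, hconn, ⟨c1, hc1, hIc1⟩, ⟨c2, hc2, hJc2⟩⟩, hmin⟩ := h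
  have allI : ∀ c ∈ C, G.dir I c := fun c hc =>
    G.dir_all hSA hMeek (hconn c1 hc1 c hc) hIc1
  have allJ : ∀ c ∈ C, G.dir J c := fun c hc =>
    G.dir_all hSA hMeek (hconn c2 hc2 c hc) hJc2
  have hCeq : C = {c1} := by
    rw [Set.eq_singleton_iff_unique_mem]
    refine ⟨hc1, fun x hx => ?_⟩
    by_contra hxne
    have hss : ({c1} : Set V) ⊂ C :=
      ⟨Set.singleton_subset_iff.mpr hc1, fun hsub => hxne (hsub hx)⟩
    refine hmin {c1} hss ⟨⟨c1, rfl⟩, ?_, ⟨c1, rfl, hIc1⟩, ⟨c1, rfl, allJ c1 hc1⟩⟩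
    intro a ha b hb
    rw [Set.mem_singleton_iff] at ha hb
    subst ha; subst hb; exact Relation.ReflTransGen.refl
  exact ⟨c1, hCeq, hIc1, allJ c1 hc1⟩

lemma mc_D_singleton (D : PDG V) (hDAG : D.IsDAG)
    {I J : V} {C : Set V} (h : D.MinimalComplex I C J) :
    ∃ k, C = {k} ∧ D.dir I k ∧ D.dir J k := by
  obtain ⟨hne, hnadj, hchain, ⟨hCne, hconn, ⟨c1, hc1, hIc1⟩, ⟨c2, hc2, hJc2⟩⟩, hmin⟩ := h
  have heq : ∀ a ∈ C, ∀ b ∈ C, a = b := by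
    intro a ha b hb
    induction hconn a ha b hb with
    | refl => rfl
    | tail h hstep ih => exact absurd hstep.1 (hDAG.1 _ _)
  have hCeq : C = {c1} :=
    Set.eq_singleton_iff_unique_mem.mpr ⟨hc1, fun x hx => heq x hx c1 hc1⟩
  have hc2eq : c2 = c1 := heq c2 hc2 c1 hc1
  exact ⟨c1, hCeq, hIc1, hc2eq ▸ hJc2⟩

end PDG

/-- If `G` is strictly acyclic with `I→J, J—K ⇒ I, K` adjacent, and
`D ∈ [G]`, then `D` and `G` have the same skeleton and exactly the same minimal
complexes (hence, by Frydenberg's characterization, they are Markov-equivalent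
chain graphs). -/
theorem stmt3 {V : Type} [Fintype V] (G D : PDG V)
    (hSA : G.StrictlyAcyclic)
    (hMeek : ∀ I J K : V, G.dir I J → G.undir J K → G.Adj I K)
    (hD : D.InClass G) :
    (∀ i j : V, D.Adj i j ↔ G.Adj i j) ∧
      (∀ (I : V) (C : Set V) (J : V), D.MinimalComplex I C J ↔ G.MinimalComplex I C J) := by
  obtain ⟨hDAG, hskel, hdir, hUC⟩ := hD
  refine ⟨hskel, fun I C J => ?_⟩
  constructor
  · intro h
    obtain ⟨k, rfl, hIk, hJk⟩ := D.mc_D_singleton hDAG h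
    have hUCg := hUC I k J ⟨h.1, hIk, hJk, h.2.1⟩
    have hnadjG : ¬ G.Adj I J := fun ha => h.2.1 ((hskel I J).mpr ha)
    exact G.mc_singleton h.1 hnadjG hUCg.2.1 hUCg.2.2.1
  · intro h
    obtain ⟨k, rfl, hIk, hJk⟩ := G.mc_G_singleton hSA hMeek h
    have hnadjD : ¬ D.Adj I J := fun ha => h.2.1 ((hskel I J).mp ha)
    exact D.mc_singleton h.1 hnadjD (hdir _ _ hIk) (hdir _ _ hJk)
end

section
/- Let G be a partially directed graph on a finite vertex set V that is strictly acyclic and satisfies: whenever I→J is a directed edge and J—K is an undirected edge of G, the vertices I and K are adjacent. Let D ∈ [G]. Given finite nonempty sets 𝒳_i for i∈V and a strictly positive pmf p on ∏_{i∈V}𝒳_i that factorizes according to D, then p also admits the chain-graph outer factorization of G: for every configuration v, p(v) = ∏_{τ} p(v_τ | v_{Pa_G(τ)}), where the product runs over the chain components τ of G. -/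
open scoped Classical

/-!
Fix a chain component `τ` of `G` and let `B` be the set of vertices outside `τ` from which a
semi-directed path leads into `τ`. Since every edge `j → x` of `D ∈ [G]` is a semi-directed
step `j → x` or `j — x` of `G`, strict acyclicity makes both `B` and `B ∪ τ` ancestral in `D`
and puts `Pa_G(τ)` inside `B`, while every `D`-parent of a vertex of `τ` lies in `τ ∪ Pa_G(τ)`.
For a `D`-ancestral set `A` the marginal `p_A` is the product of the `D`-factors of the vertices
of `A` (add a `D`-minimal vertex at a time; its factor sums to one). Summing `p_{B ∪ τ}` over
`B \ Pa_G(τ)` then gives `p(v_τ | v_{Pa_G(τ)}) = ∏_{i ∈ τ} p(v_i | v_{Pa_D(i)})`, and the product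
over the chain components, which partition `V`, is the `D`-factorization of `p`.
-/

open Finset

theorem Relation.ReflTransGen.exists_seq_of_head {α : Type*} {r : α → α → Prop} {a b c : α}
    (hab : r a b) (hbc : Relation.ReflTransGen r b c) :
    ∃ (n : ℕ) (f : ℕ → α), 1 ≤ n ∧ f 0 = a ∧ f 1 = b ∧ f n = c ∧
      ∀ i < n, r (f i) (f (i + 1)) := by
  induction hbc with
  | refl =>
    refine ⟨1, fun k => if k = 0 then a else b, le_rfl, rfl, rfl, rfl, fun i hi => ?_⟩
    obtain rfl : i = 0 := by omega
    simpa using hab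
  | @tail c d _ hcd ih =>
    obtain ⟨n, f, hn, h0, h1, hc, hf⟩ := ih
    refine ⟨n + 1, fun k => if k ≤ n then f k else d, by omega, by simp [h0],
      by simp [hn, h1], by simp, fun i hi => ?_⟩
    rcases Nat.lt_or_ge i n with hin | hin
    · simpa [hin.le, Nat.succ_le_of_lt hin] using hf i hin
    · obtain rfl : i = n := by omega
      simpa [hc] using hcd

namespace PDG

variable {V : Type} {G D : PDG V}

lemma Pa_mono {A B : Set V} (h : A ⊆ B) : G.Pa A ⊆ G.Pa B :=
  fun _ ⟨d, hd, hdir⟩ => ⟨d, h hd, hdir⟩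

lemma Pa_union (A B : Set V) : G.Pa (A ∪ B) = G.Pa A ∪ G.Pa B := by
  ext j
  simp only [Pa, Set.mem_union, Set.mem_ofPred_eq, or_and_right, exists_or]

lemma sameChain_symm {a b : V} (h : G.sameChain a b) : G.sameChain b a :=
  have : Std.Symm G.undir := ⟨G.undir_symm⟩
  Relation.ReflTransGen.stdSymm.symm a b h

lemma sameChain_trans {a b c : V} (hab : G.sameChain a b) (hbc : G.sameChain b c) :
    G.sameChain a c :=
  Relation.ReflTransGen.trans hab hbc

lemma reflTransGen_sStep_of_sameChain {a b : V} (h : G.sameChain a b) :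
    Relation.ReflTransGen G.SStep a b :=
  Relation.ReflTransGen.mono (fun _ _ => Or.inr) _ _ h

lemma mem_chainComp_iff {i j : V} : j ∈ G.chainComp i ↔ G.chainComp j = G.chainComp i := by
  refine ⟨fun h => Set.ext fun k => ⟨sameChain_trans h, sameChain_trans (sameChain_symm h)⟩,
    fun h => h ▸ Relation.ReflTransGen.refl⟩

lemma StrictlyAcyclic.not_reflTransGen_sStep_of_dir (hG : G.StrictlyAcyclic) {a b : V}
    (hab : G.dir a b) : ¬ Relation.ReflTransGen G.SStep b a := fun hba => by
  obtain ⟨n, f, hn, h0, h1, hna, hf⟩ := hba.exists_seq_of_head (r := G.SStep) (Or.inl hab)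
  have hn2 : 2 ≤ n := by
    by_contra
    obtain rfl : n = 1 := by omega
    exact G.dir_irrefl a (by rwa [← h1, hna] at hab)
  exact hG ⟨n, f, hn2, h0.trans hna.symm, hf, 0, by omega, by rwa [h0, h1]⟩

lemma InClass.sStep_of_dir (hD : D.InClass G) {j x : V} (h : D.dir j x) : G.SStep j x := by
  rcases (hD.2.1 j x).mp (Or.inl h) with h' | h' | h'
  · exact Or.inl h'
  · exact absurd (hD.2.2.1 x j h') (D.not_dir_dir j x h)
  · exact Or.inr h'

def semiAn (G : PDG V) (c : V) : Set V := {x | Relation.ReflTransGen G.SStep x c}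

lemma StrictlyAcyclic.Pa_chainComp_subset (hG : G.StrictlyAcyclic) (c : V) :
    G.Pa (G.chainComp c) ⊆ G.semiAn c \ G.chainComp c := by
  rintro j ⟨d, hd, hjd⟩
  refine ⟨Relation.ReflTransGen.head (Or.inl hjd)
    (reflTransGen_sStep_of_sameChain (sameChain_symm hd)), fun hj => ?_⟩
  exact hG.not_reflTransGen_sStep_of_dir hjd
    (reflTransGen_sStep_of_sameChain (sameChain_trans (sameChain_symm hd) hj))

lemma InClass.Pa_semiAn_diff_chainComp_subset (hD : D.InClass G) (hG : G.StrictlyAcyclic)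
    (c : V) : D.Pa (G.semiAn c \ G.chainComp c) ⊆ G.semiAn c \ G.chainComp c := by
  rintro j ⟨x, ⟨hxc, hx⟩, hjx⟩
  have hjx' := hD.sStep_of_dir hjx
  refine ⟨Relation.ReflTransGen.head hjx' hxc, fun hj => ?_⟩
  rcases hjx' with hdir | hundir
  · exact hG.not_reflTransGen_sStep_of_dir hdir
      (Relation.ReflTransGen.trans hxc (reflTransGen_sStep_of_sameChain hj))
  · exact hx (Relation.ReflTransGen.tail hj hundir)

lemma InClass.Pa_chainComp_subset (hD : D.InClass G) (c : V) :
    D.Pa (G.chainComp c) ⊆ G.chainComp c ∪ G.Pa (G.chainComp c) := by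
  rintro j ⟨x, hx, hjx⟩
  rcases hD.sStep_of_dir hjx with h | h
  · exact Or.inr ⟨x, hx, h⟩
  · exact Or.inl (Relation.ReflTransGen.tail hx (G.undir_symm _ _ h))

lemma exists_Pa_singleton_subset [Finite V] (hD : D.IsDAG) {A : Set V} (hA : A ≠ Set.univ) :
    ∃ i ∉ A, D.Pa {i} ⊆ A := by
  have : Std.Irrefl (Relation.TransGen D.dir) := ⟨hD.2⟩
  obtain ⟨i, hiA, hmin⟩ := (Finite.wellFounded_of_trans_of_irrefl
    (Relation.TransGen D.dir)).has_min Aᶜ (Set.nonempty_compl.mpr hA)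
  refine ⟨i, hiA, fun j ⟨_, hd, hji⟩ => ?_⟩
  rw [Set.mem_singleton_iff.mp hd] at hji
  by_contra hj
  exact hmin j hj (Relation.TransGen.single hji)

end PDG

noncomputable section Marginal

open PDG

variable {V : Type} [Fintype V] [DecidableEq V] {𝒳 : V → Type} [∀ i, Fintype (𝒳 i)]
  {p : (∀ i, 𝒳 i) → ℝ}

lemma marginal_pos (hp : ∀ v, 0 < p v) (S : Set V) (v : ∀ i, 𝒳 i) : 0 < marginal p S v :=
  sum_pos' (fun w _ => by split <;> [exact (hp w).le; rfl])
    ⟨v, mem_univ v, by simp [hp v]⟩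

lemma marginal_congr {S : Set V} {v v' : ∀ i, 𝒳 i} (h : ∀ i ∈ S, v i = v' i) :
    marginal p S v = marginal p S v' := by
  unfold marginal
  refine sum_congr rfl fun w _ => ?_
  congr 1
  exact propext (forall₂_congr fun i hi => by rw [h i hi])

lemma condP_congr {A S : Set V} {v v' : ∀ i, 𝒳 i} (h : ∀ i ∈ A ∪ S, v i = v' i) :
    condP p A S v = condP p A S v' := by
  unfold condP
  rw [marginal_congr h, marginal_congr fun i hi => h i (Or.inr hi)]

lemma marginal_univ (v : ∀ i, 𝒳 i) : marginal p Set.univ v = p v := by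
  unfold marginal
  rw [sum_eq_single v, if_pos fun _ _ => rfl]
  · exact fun w _ hw => if_neg fun h => hw (funext fun i => h i trivial)
  · exact fun h => absurd (mem_univ v) h

lemma marginal_eq_sum_update {S : Set V} {i : V} (hi : i ∉ S) (v : ∀ i, 𝒳 i) :
    marginal p S v = ∑ x : 𝒳 i, marginal p ({i} ∪ S) (Function.update v i x) := by
  unfold marginal
  rw [sum_comm]
  refine sum_congr rfl fun w _ => ?_
  rw [sum_eq_single (w i)]
  · congr 1
    refine propext ⟨fun h j hj => ?_, fun h j hj => ?_⟩
    · rcases hj with rfl | hj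
      · simp
      · rw [Function.update_of_ne (ne_of_mem_of_not_mem hj hi)]
        exact h j hj
    · simpa [Function.update_of_ne (ne_of_mem_of_not_mem hj hi)] using h j (Or.inr hj)
  · exact fun x _ hx => if_neg fun h => hx (by simpa using (h i (Or.inl rfl)).symm)
  · simp

lemma sum_condP_update (hp : ∀ v, 0 < p v) {S : Set V} {i : V} (hi : i ∉ S)
    (v : ∀ i, 𝒳 i) : ∑ x : 𝒳 i, condP p {i} S (Function.update v i x) = 1 := by
  have hden : ∀ x, marginal p S (Function.update v i x) = marginal p S v := fun x =>
    marginal_congr fun k hk => Function.update_of_ne (ne_of_mem_of_not_mem hk hi) x v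
  simp only [condP, hden, ← sum_div, ← marginal_eq_sum_update hi v]
  exact div_self (marginal_pos hp S v).ne'

/-- Tower property; the coordinates outside `A` are frozen at `v`. -/
lemma marginal_eq_sum_marginal {S A : Set V} (hSA : S ⊆ A) (v : ∀ i, 𝒳 i) :
    marginal p S v =
      ∑ w : ∀ i, 𝒳 i, if ∀ i ∈ S ∪ Aᶜ, w i = v i then marginal p A w else 0 := by
  have key : ∀ u w : ∀ i, 𝒳 i, ((∀ i ∈ S ∪ Aᶜ, w i = v i) ∧ ∀ i ∈ A, u i = w i) ↔
      (∀ i ∈ S, u i = v i) ∧ A.piecewise u v = w := by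
    refine fun u w => ⟨fun ⟨hw, hu⟩ => ⟨fun i hi => (hu i (hSA hi)).trans (hw i (Or.inl hi)),
      funext fun i => ?_⟩, ?_⟩
    · by_cases hi : i ∈ A
      · simp [hi, hu i hi]
      · simp [hi, hw i (Or.inr hi)]
    · rintro ⟨hu, rfl⟩
      refine ⟨fun i hi => ?_, fun i hi => by simp [hi]⟩
      by_cases hiA : i ∈ A
      · simpa [hiA] using hu i (hi.resolve_right (not_not.mpr hiA))
      · simp [hiA]
  unfold marginal
  calc _ = ∑ u : ∀ i, 𝒳 i, ∑ w : ∀ i, 𝒳 i,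
          if (∀ i ∈ S, u i = v i) ∧ A.piecewise u v = w then p u else 0 := by
        simp only [ite_and, sum_ite_irrel, sum_ite_eq, mem_univ, if_true, sum_const_zero]
    _ = ∑ w : ∀ i, 𝒳 i, ∑ u : ∀ i, 𝒳 i,
          if (∀ i ∈ S ∪ Aᶜ, w i = v i) ∧ ∀ i ∈ A, u i = w i then p u else 0 := by
        rw [sum_comm]
        simp only [key]
    _ = _ := by simp only [ite_and, sum_ite_irrel, sum_const_zero]

end Marginal

noncomputable section DAGFactorization

open PDG

variable {V : Type} [Fintype V] [DecidableEq V] {𝒳 : V → Type} [∀ i, Fintype (𝒳 i)]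
  {p : (∀ i, 𝒳 i) → ℝ} {D : PDG V}

lemma prod_condP_congr {T S : Set V} [DecidablePred (· ∈ T)] (hT : T ∪ D.Pa T ⊆ S)
    {v w : ∀ i, 𝒳 i} (h : ∀ i ∈ S, w i = v i) :
    ∏ i with i ∈ T, condP p {i} (D.Pa {i}) w = ∏ i with i ∈ T, condP p {i} (D.Pa {i}) v := by
  refine prod_congr rfl fun i hi => condP_congr fun k hk => h k (hT ?_)
  have hiT : i ∈ T := (mem_filter.mp hi).2
  rcases hk with rfl | hk
  · exact Or.inl hiT
  · exact Or.inr (Pa_mono (Set.singleton_subset_iff.mpr hiT) hk)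

lemma prod_filter_mem_union {M : Type*} [CommMonoid M] {A B : Set V} [DecidablePred (· ∈ A)]
    [DecidablePred (· ∈ B)] (h : Disjoint A B) (f : V → M) :
    ∏ i with i ∈ A ∪ B, f i = (∏ i with i ∈ A, f i) * ∏ i with i ∈ B, f i := by
  rw [← prod_union (disjoint_filter.mpr fun i _ hA hB => h.ne_of_mem hA hB rfl),
    filter_union_right]
  exact prod_congr (filter_congr fun _ _ => Iff.rfl) fun _ _ => rfl

theorem marginal_eq_prod_of_Pa_subset (hD : D.IsDAG) (hp : ∀ v, 0 < p v)
    (hfact : FactorizesDAG p D) {A : Set V} [DecidablePred (· ∈ A)] (hA : D.Pa A ⊆ A)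
    (v : ∀ i, 𝒳 i) :
    marginal p A v = ∏ i with i ∈ A, condP p {i} (D.Pa {i}) v := by
  suffices ∀ A : Set V, D.Pa A ⊆ A → ∀ [DecidablePred (· ∈ A)] v,
      marginal p A v = ∏ i with i ∈ A, condP p {i} (D.Pa {i}) v from this A hA v
  intro A
  induction A using WellFoundedGT.induction with
  | _ A ih =>
  intro hA _ v
  by_cases hAu : A = Set.univ
  · subst hAu
    simp [marginal_univ, hfact v]
  obtain ⟨i, hiA, hi⟩ := exists_Pa_singleton_subset hD hAu
  have hiA' : D.Pa ({i} ∪ A) ⊆ {i} ∪ A := by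
    rw [Pa_union]
    exact Set.union_subset (hi.trans Set.subset_union_right) (hA.trans Set.subset_union_right)
  have hstep : ∀ x : 𝒳 i, marginal p ({i} ∪ A) (Function.update v i x) =
      condP p {i} (D.Pa {i}) (Function.update v i x) *
        ∏ j with j ∈ A, condP p {j} (D.Pa {j}) v := by
    intro x
    rw [ih ({i} ∪ A) (Set.ssubset_insert hiA) hiA',
      prod_filter_mem_union (Set.disjoint_singleton_left.mpr hiA)]
    congr 1
    · simp [prod_filter]
    · exact prod_condP_congr (Set.union_subset subset_rfl hA)
        fun k hk => Function.update_of_ne (ne_of_mem_of_not_mem hk hiA) x v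
  rw [marginal_eq_sum_update hiA, sum_congr rfl fun x _ => hstep x, ← sum_mul,
    sum_condP_update hp (fun h => D.dir_irrefl i ?_), one_mul]
  obtain ⟨_, hd, hdir⟩ := h
  rwa [Set.mem_singleton_iff.mp hd] at hdir

theorem condP_eq_prod_of_Pa_subset (hD : D.IsDAG) (hp : ∀ v, 0 < p v)
    (hfact : FactorizesDAG p D) {B T P : Set V} [DecidablePred (· ∈ B)] [DecidablePred (· ∈ T)]
    (hB : D.Pa B ⊆ B) (hBT : Disjoint B T) (hPB : P ⊆ B) (hT : D.Pa T ⊆ T ∪ P) (v : ∀ i, 𝒳 i) :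
    condP p T P v = ∏ i with i ∈ T, condP p {i} (D.Pa {i}) v := by
  have hBT' : D.Pa (B ∪ T) ⊆ B ∪ T := by
    rw [Pa_union]
    exact Set.union_subset (hB.trans Set.subset_union_left)
      (hT.trans (Set.union_subset Set.subset_union_right (hPB.trans Set.subset_union_left)))
  have hsets : (T ∪ P) ∪ (B ∪ T)ᶜ = P ∪ Bᶜ := by
    ext i
    have := hBT.notMem_of_mem_right (a := i)
    have := @hPB i
    simp only [Set.mem_union, Set.mem_compl_iff]
    tauto
  have hnum : marginal p (T ∪ P) v =
      (∏ i with i ∈ T, condP p {i} (D.Pa {i}) v) * marginal p P v := by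
    rw [marginal_eq_sum_marginal (A := B ∪ T) (Set.union_subset Set.subset_union_right
      (hPB.trans Set.subset_union_left)), marginal_eq_sum_marginal hPB, mul_sum]
    refine sum_congr rfl fun w _ => ?_
    simp only [← hsets]
    split_ifs with hw
    · rw [marginal_eq_prod_of_Pa_subset hD hp hfact hBT', prod_filter_mem_union hBT,
        marginal_eq_prod_of_Pa_subset hD hp hfact hB, mul_comm,
        prod_condP_congr (Set.union_subset Set.subset_union_left hT)
          fun i hi => hw i (Or.inl hi)]
    · rw [mul_zero]
  rw [condP, hnum, mul_div_assoc, div_self (marginal_pos hp P v).ne', mul_one]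

end DAGFactorization

theorem stmt4_general {V : Type} [Fintype V] [DecidableEq V] (G D : PDG V)
    (hSA : G.StrictlyAcyclic)
    (hD : D.InClass G)
    (𝒳 : V → Type) [∀ i, Fintype (𝒳 i)]
    (p : (∀ i, 𝒳 i) → ℝ) (hp : IsPositivePMF p)
    (hfact : FactorizesDAG p D) :
    ∀ v : ∀ i, 𝒳 i, p v = chainProd G p v := by
  intro v
  rw [hfact v, chainProd, ← prod_fiberwise_of_maps_to (g := G.chainComp)
    fun i _ => mem_image_of_mem _ (mem_univ i)]
  refine prod_congr rfl fun τ hτ => ?_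
  obtain ⟨c, -, rfl⟩ := mem_image.mp hτ
  rw [condP_eq_prod_of_Pa_subset hD.1 hp.1 hfact (hD.Pa_semiAn_diff_chainComp_subset hSA c)
    Set.disjoint_sdiff_left (hSA.Pa_chainComp_subset c) (hD.Pa_chainComp_subset c)]
  exact prod_congr (filter_congr fun i _ => PDG.mem_chainComp_iff.symm) fun _ _ => rfl

/-- If `G` is strictly acyclic with `I→J, J—K ⇒ I, K` adjacent, `D ∈ [G]`,
and the strictly positive pmf `p` factorizes according to `D`, then `p` admits the outer
chain-graph factorization of `G`: `p(v) = ∏_τ p(v_τ | v_{Pa_G(τ)})` over the chain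
components `τ` of `G`. -/
theorem stmt4 {V : Type} [Fintype V] [DecidableEq V] (G D : PDG V)
    (hSA : G.StrictlyAcyclic)
    (hMeek : ∀ I J K : V, G.dir I J → G.undir J K → G.Adj I K)
    (hD : D.InClass G)
    (𝒳 : V → Type) [∀ i, Fintype (𝒳 i)] [∀ i, Nonempty (𝒳 i)]
    (p : (∀ i, 𝒳 i) → ℝ) (hp : IsPositivePMF p)
    (hfact : FactorizesDAG p D) :
    ∀ v : ∀ i, 𝒳 i, p v = chainProd G p v :=
  stmt4_general G D hSA hD 𝒳 p hp hfact
end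

section
/- Let G be a partially directed graph on a finite vertex set V that is strictly acyclic and satisfies: whenever I→J is a directed edge and J—K is an undirected edge of G, the vertices I and K are adjacent. Let X and Y be disjoint vertex subsets such that G has no proper semi-directed path from X to Y that starts with an undirected edge. Then in the graph RM(G;X,Y), whenever I→J is a directed edge and J—K is an undirected edge, the directed edge I→K is also present. -/
open scoped Classical

/-!
Meek's hypothesis makes `I` and `K` adjacent, and strict acyclicity leaves `I → K` as the only
possible orientation (`K → I` and `I — K` close the semi-directed cycles `K → I → J — K` and
`I → J — K — I`). This edge survives in `G(↛X)` because `K ∉ X ∩ An_G(Y)`: otherwise `K — J`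
followed by a directed path from `J` to `Y` in `G(↛X)` would be a proper semi-directed path from
`X` to `Y` starting with an undirected edge. That path avoids `X` since it lies in `An_G(Y)` and
enters no vertex of `X ∩ An_G(Y)`, and it is simple because directed walks in a strictly acyclic
graph cannot revisit a vertex.
-/

theorem Relation.ReflTransGen.exists_chain {α : Type*} {r : α → α → Prop} {a b : α}
    (h : Relation.ReflTransGen r a b) :
    ∃ (m : ℕ) (f : ℕ → α), f 0 = a ∧ f m = b ∧ ∀ i < m, r (f i) (f (i + 1)) := by
  induction h using Relation.ReflTransGen.head_induction_on with
  | refl => exact ⟨0, fun _ => b, rfl, rfl, by simp⟩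
  | head hac _ ih =>
    obtain ⟨m, f, h0, hm, hs⟩ := ih
    refine ⟨m + 1, fun | 0 => _ | k + 1 => f k, rfl, hm, ?_⟩
    rintro (_ | i) hi
    · simpa [h0] using hac
    · exact hs i (by omega)

namespace PDG

variable {V : Type} {G : PDG V} {X Y : Set V}

theorem notMem_of_noInto_chain {m : ℕ} {f : ℕ → V}
    (hs : ∀ i < m, (G.noInto X Y).dir (f i) (f (i + 1))) (hm : f m ∈ Y)
    (h0 : f 0 ∉ X ∩ G.An Y) : ∀ i ≤ m, f i ∉ X := by
  intro i hi hiX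
  have hiA : f i ∈ G.An Y := by
    refine ⟨f m, hm, ?_⟩
    have hchain := reflTransGen_of_succ_of_le (fun k l => G.dir (f k) (f l))
      (fun k hk => (hs k hk.2).1) hi
    exact hchain.lift f fun _ _ h => h
  cases i with
  | zero => exact h0 ⟨hiX, hiA⟩
  | succ i => exact (hs i (by omega)).2 ⟨hiX, hiA⟩

theorem hasSemiDirectedCycle_of_triangle {a b c : V} (hab : G.dir a b) (hbc : G.SStep b c)
    (hca : G.SStep c a) : G.HasSemiDirectedCycle := by
  refine ⟨3, fun | 0 => a | 1 => b | 2 => c | _ => a, by omega, rfl, ?_, 0, by omega, hab⟩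
  intro i hi
  interval_cases i
  exacts [Or.inl hab, hbc, hca]

namespace StrictlyAcyclic

theorem dir_of_dir_of_undir_of_adj (hSA : G.StrictlyAcyclic) {I J K : V} (hIJ : G.dir I J)
    (hJK : G.undir J K) (hIK : G.Adj I K) : G.dir I K := by
  rcases hIK with hIK | hKI | hIK
  · exact hIK
  · exact (hSA (hasSemiDirectedCycle_of_triangle hKI (Or.inl hIJ) (Or.inr hJK))).elim
  · exact (hSA (hasSemiDirectedCycle_of_triangle hIJ (Or.inr hJK)
      (Or.inr (G.undir_symm I K hIK)))).elim

theorem injective_of_dir_chain (hSA : G.StrictlyAcyclic) {m : ℕ} {f : ℕ → V}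
    (hs : ∀ i < m, G.dir (f i) (f (i + 1))) : ∀ i ≤ m, ∀ j ≤ m, f i = f j → i = j := by
  intro i hi j hj hij
  wlog hlt : i < j generalizing i j
  · rcases (not_lt.mp hlt).eq_or_lt with h | h
    · exact h.symm
    · exact (this j hj i hi hij.symm h).symm
  obtain rfl | hlong := (show i + 1 ≤ j from hlt).eq_or_lt
  · exact (G.dir_irrefl _ (hij ▸ hs i (by omega))).elim
  exact (hSA ⟨j - i, fun k => f (i + k), by omega, by simpa [Nat.add_sub_cancel' hlt.le],
    fun k hk => Or.inl (hs (i + k) (by omega)), 0, by omega, hs i (by omega)⟩).elim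

theorem hasProperUndirStartPath (hSA : G.StrictlyAcyclic) {K J : V} (hK : K ∈ X)
    (hKJ : G.undir K J) (hJA : J ∈ (G.noInto X Y).An Y) (hJ : J ∉ X ∩ G.An Y) :
    G.HasProperUndirStartPath X Y := by
  obtain ⟨y, hy, hJy⟩ := hJA
  obtain ⟨m, f, rfl, rfl, hs⟩ := hJy.exists_chain
  have hfX := notMem_of_noInto_chain hs hy hJ
  have hinj := hSA.injective_of_dir_chain fun i hi => (hs i hi).1
  refine ⟨m + 1, fun | 0 => K | k + 1 => f k, by omega, ?_, hK, hy, ?_, ?_, hKJ⟩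
  · rintro (_ | i) hi (_ | j) hj hij
    · rfl
    · exact (hfX j (by omega) ((show K = f j from hij) ▸ hK)).elim
    · exact (hfX i (by omega) ((show f i = K from hij) ▸ hK)).elim
    · exact congrArg (· + 1) (hinj i (by omega) j (by omega) hij)
  · rintro (_ | i) hi
    · exact Or.inr hKJ
    · exact Or.inl (hs i (by omega)).1
  · rintro (_ | i) h1 h2
    · omega
    · exact hfX i (by omega)

end StrictlyAcyclic

end PDG

theorem stmt5_general {V : Type} (G : PDG V)
    (hSA : G.StrictlyAcyclic)
    (hMeek : ∀ I J K : V, G.dir I J → G.undir J K → G.Adj I K)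
    (X Y : Set V)
    (hpath : ¬ G.HasProperUndirStartPath X Y) :
    ∀ I J K : V, (G.RM X Y).dir I J → (G.RM X Y).undir J K → (G.RM X Y).dir I K := by
  rintro I J K ⟨⟨hIJ, hJ⟩, hIA, hJA⟩ ⟨hJK, -, hKA⟩
  have hIK := hSA.dir_of_dir_of_undir_of_adj hIJ hJK (hMeek I J K hIJ hJK)
  have hK : K ∉ X ∩ G.An Y := fun hK =>
    hpath (hSA.hasProperUndirStartPath hK.1 (G.undir_symm J K hJK) hJA hJ)
  exact ⟨⟨hIK, hK⟩, hIA, hKA⟩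

/-- If `G` is strictly acyclic with `I→J, J—K ⇒ I, K` adjacent, and there is
no proper semi-directed path from `X` to `Y` starting with an undirected edge, then in
`RM(G;X,Y)` the configuration `I→J, J—K` always comes with the directed edge `I→K`. -/
theorem stmt5 {V : Type} [Fintype V] (G : PDG V)
    (hSA : G.StrictlyAcyclic)
    (hMeek : ∀ I J K : V, G.dir I J → G.undir J K → G.Adj I K)
    (X Y : Set V) (hXY : Disjoint X Y)
    (hpath : ¬ G.HasProperUndirStartPath X Y) :
    ∀ I J K : V, (G.RM X Y).dir I J → (G.RM X Y).undir J K → (G.RM X Y).dir I K :=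
  stmt5_general G hSA hMeek X Y hpath
end

section
/- Let G be a partially directed graph on a finite vertex set V that is strictly acyclic and satisfies: whenever I→J is a directed edge and J—K is an undirected edge of G, the vertices I and K are adjacent. Let X and Y be disjoint vertex subsets such that G has no proper semi-directed path from X to Y that starts with an undirected edge. Then for every chain component τ of G with τ∩X ≠ ∅, one has (τ∖X) ∩ An_{G(↛X)}(Y) = ∅, where G(↛X) is G with all directed edges into X∩An_G(Y) removed. -/
open scoped Classical

/-!
Suppose `v ∈ τ ∖ X` is an ancestor of `Y` in `G(↛X)`. Walking along undirected edges inside `τ`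
from a vertex of `X` to `v`, consider the last step that leaves `X`: it is an undirected edge
`x — u` with `x ∈ X`, after which the walk stays outside `X` up to `v`. From `v` follow a directed
path of `G(↛X)` to `Y`; it never enters `X`, because each of its vertices is an ancestor of `Y`
in `G`, and the edges into `X ∩ An_G(Y)` are gone. Removing repeated vertices from the walk
`u ⋯ v ⋯ y` and prepending `x` yields a proper semi-directed path from `X` to `Y` that starts
with an undirected edge.
-/

namespace Relation

variable {α : Type*} {r : α → α → Prop} {a b : α}

theorem ReflTransGen.exists_chain_s6 (h : ReflTransGen r a b) :
    ∃ (n : ℕ) (f : ℕ → α), f 0 = a ∧ f n = b ∧ ∀ i < n, r (f i) (f (i + 1)) := by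
  induction h with
  | refl => exact ⟨0, fun _ => a, rfl, rfl, by simp⟩
  | @tail c d _ hcd ih =>
    obtain ⟨n, f, h0, hn, hs⟩ := ih
    refine ⟨n + 1, fun i => if i ≤ n then f i else d, by simp [h0], by simp, fun i hi => ?_⟩
    rcases Nat.lt_or_ge i n with hin | hin
    · simpa [hin.le, Nat.succ_le_of_lt hin] using hs i hin
    · obtain rfl : i = n := by omega
      simpa [hn] using hcd

theorem ReflTransGen.exists_injective_chain (h : ReflTransGen r a b) :
    ∃ (n : ℕ) (f : ℕ → α), f 0 = a ∧ f n = b ∧ (∀ i < n, r (f i) (f (i + 1))) ∧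
      ∀ i ≤ n, ∀ j ≤ n, f i = f j → i = j := by
  have hex := h.exists_chain_s6
  obtain ⟨f, h0, hn, hs⟩ := Nat.find_spec hex
  refine ⟨_, f, h0, hn, hs, ?_⟩
  set n := Nat.find hex
  suffices hlt : ∀ i j, i < j → j ≤ n → f i ≠ f j by
    intro i hi j hj hij
    rcases lt_trichotomy i j with hij' | rfl | hji
    exacts [absurd hij (hlt i j hij' hj), rfl, absurd hij.symm (hlt j i hji hi)]
  intro i j hij hj hfij
  -- cutting out the loop `f i = f j` gives a shorter chain
  refine Nat.find_min hex (m := n - (j - i)) (by omega)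
    ⟨fun t => if t ≤ i then f t else f (t + (j - i)), by simp [h0], ?_, fun t ht => ?_⟩
  · by_cases hjn : j = n
    · rw [show n - (j - i) = i by omega]
      simp only [le_refl, ite_true]
      rw [hfij, hjn, hn]
    · simp [show ¬ n - (j - i) ≤ i by omega, show n - (j - i) + (j - i) = n by omega, hn]
  · rcases lt_trichotomy t i with hti | rfl | hit
    · simpa [hti.le, Nat.succ_le_of_lt hti] using hs t (by omega)
    · simpa [hfij, show t + 1 + (j - t) = j + 1 by omega] using hs j (by omega)
    · simpa [show ¬ t ≤ i by omega, show ¬ t + 1 ≤ i by omega,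
        show t + 1 + (j - i) = t + (j - i) + 1 by omega] using hs (t + (j - i)) (by omega)

theorem ReflTransGen.exists_last_exit {p : α → Prop} (h : ReflTransGen r a b) (ha : p a)
    (hb : ¬ p b) :
    ∃ a' b', p a' ∧ r a' b' ∧ ¬ p b' ∧ ReflTransGen (fun x y => r x y ∧ ¬ p y) b' b := by
  induction h with
  | refl => exact absurd ha hb
  | @tail c d _ hcd ih =>
    by_cases hc : p c
    · exact ⟨c, d, hc, hcd, hb, .refl⟩
    · obtain ⟨a', b', ha', hab', hb', hrest⟩ := ih hc
      exact ⟨a', b', ha', hab', hb', hrest.tail ⟨hcd, hb⟩⟩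

end Relation

namespace PDG

open Relation

variable {V : Type} (G : PDG V)

theorem sameChain_symm_s6 {i j : V} (h : G.sameChain i j) : G.sameChain j i :=
  ReflTransGen.mono (fun a b hab => G.undir_symm b a hab) _ _ (reflTransGen_swap.mpr h)

def SStepOutside (X : Set V) (i j : V) : Prop := G.SStep i j ∧ j ∉ X

variable {G}

theorem reflTransGen_sStepOutside_of_noInto {X Y : Set V} {v y : V}
    (h : ReflTransGen (G.noInto X Y).dir v y) (hy : y ∈ Y) :
    ReflTransGen (G.SStepOutside X) v y := by
  induction h using ReflTransGen.head_induction_on with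
  | refl => exact .refl
  | @head v w hvw hwy ih =>
    have hwAn : w ∈ G.An Y := ⟨y, hy, ReflTransGen.mono (fun _ _ e => e.1) _ _ hwy⟩
    exact .head ⟨.inl hvw.1, fun hwX => hvw.2 ⟨hwX, hwAn⟩⟩ ih

theorem hasProperUndirStartPath_of_undir {X Y : Set V} {x u y : V} (hx : x ∈ X)
    (hxu : G.undir x u) (hu : u ∉ X) (huy : ReflTransGen (G.SStepOutside X) u y)
    (hy : y ∈ Y) : G.HasProperUndirStartPath X Y := by
  obtain ⟨n, f, hf0, hfn, hfs, hfinj⟩ := huy.exists_injective_chain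
  have hfX : ∀ t ≤ n, f t ∉ X := by
    rintro (_ | t) ht
    exacts [hf0 ▸ hu, (hfs t (by omega)).2]
  let g : ℕ → V := fun | 0 => x | t + 1 => f t
  have hxf0 : G.undir x (f 0) := hf0 ▸ hxu
  refine ⟨n + 1, g, by omega, ?_, hx, (hfn ▸ hy : f n ∈ Y), ?_, ?_, hxf0⟩
  · rintro (_ | i) hi (_ | j) hj hij
    · rfl
    · have hxf : x = f j := hij
      exact absurd (hxf ▸ hx) (hfX j (by omega))
    · have hfx : f i = x := hij
      exact absurd (hfx ▸ hx) (hfX i (by omega))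
    · rw [hfinj i (by omega) j (by omega) hij]
  · rintro (_ | t) ht
    exacts [.inr hxf0, (hfs t (by omega)).1]
  · rintro (_ | t) ht1 ht
    exacts [absurd ht1 (by omega), hfX t (by omega)]

end PDG

theorem stmt6_general {V : Type} (G : PDG V)
    (X Y : Set V)
    (hpath : ¬ G.HasProperUndirStartPath X Y) :
    ∀ i : V, (G.chainComp i ∩ X).Nonempty →
      (G.chainComp i \ X) ∩ (G.noInto X Y).An Y = ∅ := by
  rintro i ⟨x, hxτ, hxX⟩
  refine Set.eq_empty_of_forall_notMem ?_
  rintro v ⟨⟨hvτ, hvX⟩, y, hy, hvy⟩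
  have hxv : Relation.ReflTransGen G.undir x v := (G.sameChain_symm_s6 hxτ).trans hvτ
  obtain ⟨x', u, hx', hx'u, hu, huv⟩ := hxv.exists_last_exit (p := (· ∈ X)) hxX hvX
  have huv' : Relation.ReflTransGen (G.SStepOutside X) u v :=
    Relation.ReflTransGen.mono (fun _ _ e => ⟨.inr e.1, e.2⟩) _ _ huv
  exact hpath (PDG.hasProperUndirStartPath_of_undir hx' hx'u hu
    (huv'.trans (PDG.reflTransGen_sStepOutside_of_noInto hvy hy)) hy)

/-- If `G` is strictly acyclic with `I→J, J—K ⇒ I, K` adjacent and there is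
no proper semi-directed path from `X` to `Y` starting with an undirected edge, then every
chain component `τ` of `G` meeting `X` satisfies `(τ∖X) ∩ An_{G(↛X)}(Y) = ∅`. -/
theorem stmt6 {V : Type} [Fintype V] (G : PDG V)
    (hSA : G.StrictlyAcyclic)
    (hMeek : ∀ I J K : V, G.dir I J → G.undir J K → G.Adj I K)
    (X Y : Set V) (hXY : Disjoint X Y)
    (hpath : ¬ G.HasProperUndirStartPath X Y) :
    ∀ i : V, (G.chainComp i ∩ X).Nonempty →
      (G.chainComp i \ X) ∩ (G.noInto X Y).An Y = ∅ :=
  stmt6_general G X Y hpath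
end
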